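/- arXiv:1409.2679 — 6 statements merged into one kernel-verified Lean document; each statement's English description precedes it below -/
import Mathlib

section
/- Let U, V, X be finite-dimensional real inner product spaces, F : X → U and G : X → V linear maps, σ > 0, and Σ_f, Σ_g self-adjoint positive semidefinite operators on U and V respectively. Let E_g be a self-adjoint positive definite operator on V with E_g ⪰ σ⁻¹Σ_g + G G*, set T_g := E_g − σ⁻¹Σ_g − G G* (which is positive semidefinite), and for a self-adjoint positive semidefinite T_f on U set T̂_f := T_f + F G* E_g⁻¹ G F*. Then the block operator W on U × V given by W = [[F F* + σ⁻¹Σ_f + T̂_f, F G*], [G F*, G G* + σ⁻¹Σ_g + T_g]] is positive definite if and only if F F* + σ⁻¹Σ_f + T_f is positive definite. -/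
open ContinuousLinearMap RealInnerProductSpace

noncomputable section

/-- `T` is positive semidefinite: self-adjoint and `⟪x, T x⟫ ≥ 0` for all `x`. -/
def IsPSD {W : Type*} [NormedAddCommGroup W] [InnerProductSpace ℝ W]
    (T : W →L[ℝ] W) : Prop :=
  (∀ x y, ⟪T x, y⟫ = ⟪x, T y⟫) ∧ ∀ x, 0 ≤ ⟪x, T x⟫

/-- `T` is positive definite: self-adjoint and `⟪x, T x⟫ > 0` for all `x ≠ 0`. -/
def IsPD {W : Type*} [NormedAddCommGroup W] [InnerProductSpace ℝ W]
    (T : W →L[ℝ] W) : Prop :=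
  (∀ x y, ⟪T x, y⟫ = ⟪x, T y⟫) ∧ ∀ x, x ≠ 0 → 0 < ⟪x, T x⟫

/-- Schur-complement criterion for the SCB proximal term: the block operator
`W = [[F F* + σ⁻¹Σ_f + T̂_f, F G*], [G F*, G G* + σ⁻¹Σ_g + T_g]]` is positive
definite (expressed through its quadratic form on `U × V`) iff
`F F* + σ⁻¹Σ_f + T_f` is positive definite. -/
theorem scb_block_posdef_iff
    {X U V : Type*}
    [NormedAddCommGroup X] [InnerProductSpace ℝ X] [FiniteDimensional ℝ X]
    [NormedAddCommGroup U] [InnerProductSpace ℝ U] [FiniteDimensional ℝ U]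
    [NormedAddCommGroup V] [InnerProductSpace ℝ V] [FiniteDimensional ℝ V]
    (F : X →L[ℝ] U) (G : X →L[ℝ] V) (σ : ℝ) (hσ : 0 < σ)
    (Sf : U →L[ℝ] U) (Sg : V →L[ℝ] V) (hSf : IsPSD Sf) (hSg : IsPSD Sg)
    (Eg Eginv : V →L[ℝ] V) (hEg : IsPD Eg)
    (hmaj : IsPSD (Eg - (σ⁻¹ • Sg + G.comp (adjoint G))))
    (hinv1 : Eg.comp Eginv = 1) (hinv2 : Eginv.comp Eg = 1)
    (Tf : U →L[ℝ] U) (hTf : IsPSD Tf) :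
    let Tg : V →L[ℝ] V := Eg - σ⁻¹ • Sg - G.comp (adjoint G)
    let Tfhat : U →L[ℝ] U :=
      Tf + F.comp ((adjoint G).comp (Eginv.comp (G.comp (adjoint F))))
    ((∀ (u : U) (v : V), ¬(u = 0 ∧ v = 0) →
        0 < ⟪u, (F.comp (adjoint F) + σ⁻¹ • Sf + Tfhat) u⟫
            + 2 * ⟪u, (F.comp (adjoint G)) v⟫
            + ⟪v, (G.comp (adjoint G) + σ⁻¹ • Sg + Tg) v⟫)
      ↔ IsPD (F.comp (adjoint F) + σ⁻¹ • Sf + Tf)) := by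
  intro Tg Tfhat
  set A : U →L[ℝ] U := F.comp (adjoint F) + σ⁻¹ • Sf + Tf with hA
  -- Eg applied to Eginv
  have hEgEginv : ∀ x : V, Eg (Eginv x) = x := by
    intro x
    have := congrArg (fun T : V →L[ℝ] V => T x) hinv1
    simpa using this
  -- Eg self-adjointness facts
  have hEgsa := hEg.1
  -- key completed-square identity
  have key : ∀ (u : U) (v : V),
      ⟪u, (F.comp (adjoint F) + σ⁻¹ • Sf + Tfhat) u⟫
        + 2 * ⟪u, (F.comp (adjoint G)) v⟫
        + ⟪v, (G.comp (adjoint G) + σ⁻¹ • Sg + Tg) v⟫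
      = ⟪u, A u⟫ + ⟪v + Eginv (G (adjoint F u)), Eg (v + Eginv (G (adjoint F u)))⟫ := by
    intro u v
    set s : V := G (adjoint F u) with hs
    have h1 : ⟪u, (F.comp (adjoint G)) v⟫ = ⟪s, v⟫ := by
      rw [comp_apply, ← adjoint_inner_left, adjoint_inner_right]
    have h2 : ⟪u, Tfhat u⟫ = ⟪u, Tf u⟫ + ⟪s, Eginv s⟫ := by
      simp only [Tfhat, add_apply, comp_apply, inner_add_right]
      congr 1
      rw [← adjoint_inner_left, adjoint_inner_right]
    have h3 : ⟪Eginv s, Eg v⟫ = ⟪s, v⟫ := by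
      rw [← hEgsa, hEgEginv]
    have h4 : ⟪v, Eg (Eginv s)⟫ = ⟪s, v⟫ := by
      rw [hEgEginv, real_inner_comm]
    have h5 : ⟪Eginv s, Eg (Eginv s)⟫ = ⟪s, Eginv s⟫ := by
      rw [← hEgsa, hEgEginv, real_inner_comm]
    have h6 : (G.comp (adjoint G) + σ⁻¹ • Sg + Tg) = Eg := by
      simp only [Tg]; abel
    rw [h6]
    simp only [map_add, inner_add_left, inner_add_right, h3, h4, h5]
    simp only [hA, add_apply, inner_add_right, h1, h2]
    ring
  -- A is self-adjoint
  have hFF : ∀ x y : U, ⟪F ((adjoint F) x), y⟫ = ⟪x, F ((adjoint F) y)⟫ := by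
    intro x y
    rw [← adjoint_inner_right, adjoint_inner_left]
  have hAsa : ∀ x y : U, ⟪A x, y⟫ = ⟪x, A y⟫ := by
    intro x y
    simp only [hA, add_apply, comp_apply, smul_apply, inner_add_left, inner_add_right,
      real_inner_smul_left, real_inner_smul_right]
    rw [hFF x y, hSf.1 x y, hTf.1 x y]
  constructor
  · intro h
    refine ⟨hAsa, fun u hu => ?_⟩
    have := h u (-(Eginv (G (adjoint F u)))) (fun hc => hu hc.1)
    rw [key] at this
    simpa using this
  · intro hApd
    intro u v huv
    rw [key]
    by_cases hu : u = 0
    · have hv : v ≠ 0 := fun hv => huv ⟨hu, hv⟩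
      have hw : v + Eginv (G (adjoint F u)) = v := by simp [hu]
      rw [hw]
      have h1 : ⟪u, A u⟫ = 0 := by simp [hu]
      have h2 := hEg.2 v hv
      linarith
    · have h1 := hApd.2 u hu
      set w := v + Eginv (G (adjoint F u)) with hwdef
      by_cases hw : w = 0
      · rw [hw]; simpa using h1
      · have h2 := hEg.2 w hw
        linarith

end
end

section
/- For any proper closed convex function f on a finite-dimensional real inner product space X and any τ > 0, every x ∈ X satisfies the Moreau decomposition x = Prox_{τ f*}(x) + τ · Prox_{f/τ}(x/τ), where f* is the Fenchel conjugate of f and Prox_g(w) = argmin_u { g(u) + (1/2)‖u − w‖² }. -/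
/-!
Write `s = x - τ • q`. Comparing `f` along the segment from `q` to any point with the minimality
of `q` for `f / τ + ½‖· - x / τ‖²` and letting the step tend to `0` shows that `s` is a
subgradient of `f` at `q`. For a subgradient the Fenchel–Young inequality is an equality,
`f* s = ⟪q, s⟫ - f q`, while `u ↦ ⟪q, u⟫ - f q` minorizes `f*` everywhere. Hence the objective
`τ f* u + ½‖u - x‖²` exceeds its value at `s` by at least `½‖u - s‖²`, so the prox point `p` of
`τ f*` at `x` is `s`.
-/

open RealInnerProductSpace

noncomputable section

/-- The Fenchel conjugate of an extended-real-valued function. -/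
def conjFn {X : Type*} [NormedAddCommGroup X] [InnerProductSpace ℝ X]
    (f : X → EReal) (y : X) : EReal :=
  ⨆ x : X, ((⟪x, y⟫ : ℝ) : EReal) - f x

/-- `p` is the proximal point of `g` at `w`:
`p` minimizes `u ↦ g(u) + (1/2)‖u − w‖²`. -/
def IsProxOf {X : Type*} [NormedAddCommGroup X] [InnerProductSpace ℝ X]
    (g : X → EReal) (w p : X) : Prop :=
  ∀ u : X, g p + ((((1:ℝ)/2) * ‖p - w‖ ^ 2 : ℝ) : EReal)
    ≤ g u + ((((1:ℝ)/2) * ‖u - w‖ ^ 2 : ℝ) : EReal)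

open Filter Topology Set

theorem le_of_forall_mem_Ioc_le_add_mul {a b K : ℝ}
    (h : ∀ t ∈ Ioc (0 : ℝ) 1, a ≤ b + t * K) : a ≤ b := by
  have hlim : Tendsto (fun t : ℝ => b + t * K) (𝓝[>] 0) (𝓝 b) := by
    have : Continuous fun t : ℝ => b + t * K := by fun_prop
    simpa using (this.tendsto 0).mono_left nhdsWithin_le_nhds
  exact ge_of_tendsto hlim (mem_of_superset (Ioc_mem_nhdsGT zero_lt_one) h)

section

variable {X : Type*} [NormedAddCommGroup X] [InnerProductSpace ℝ X]

def IsSubgradient (f : X → EReal) (q y : X) : Prop :=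
  ∀ v, f q + ((⟪y, v - q⟫ : ℝ) : EReal) ≤ f v

theorem IsProxOf.ne_top {g : X → EReal} {w p u : X} (hp : IsProxOf g w p) (hu : g u ≠ ⊤) :
    g p ≠ ⊤ := by
  intro h
  have := hp u
  rw [h, EReal.top_add_coe, top_le_iff] at this
  exact (EReal.add_lt_top hu (EReal.coe_ne_top _)).ne this

theorem le_conjFn (f : X → EReal) (x y : X) : ((⟪x, y⟫ : ℝ) : EReal) - f x ≤ conjFn f y :=
  le_iSup (fun x => ((⟪x, y⟫ : ℝ) : EReal) - f x) x

theorem IsSubgradient.conjFn_eq {f : X → EReal} {q y : X} (h : IsSubgradient f q y) {a : ℝ}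
    (hfq : f q = a) : conjFn f y = ((⟪q, y⟫ - a : ℝ) : EReal) := by
  refine le_antisymm (iSup_le fun v => ?_) (by simpa [hfq] using le_conjFn f q y)
  have hv := h v
  rw [hfq, ← EReal.coe_add] at hv
  calc ((⟪v, y⟫ : ℝ) : EReal) - f v ≤ ((⟪v, y⟫ : ℝ) : EReal) - ((a + ⟪y, v - q⟫ : ℝ) : EReal) :=
        EReal.sub_le_sub le_rfl hv
    _ = ((⟪q, y⟫ - a : ℝ) : EReal) := by
        rw [← EReal.coe_sub, inner_sub_right, real_inner_comm y v, real_inner_comm y q]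
        congr 1; ring

theorem IsProxOf.le_along_segment {f : X → EReal}
    (hconvex : ∀ (x y : X) (t : ℝ), 0 ≤ t → t ≤ 1 →
      f (t • x + (1 - t) • y) ≤ ((t : ℝ) : EReal) * f x + (((1 - t : ℝ)) : EReal) * f y)
    {c : ℝ} (hc : 0 ≤ c) {w q v : X} (hq : IsProxOf (fun u => (c : EReal) * f u) w q) {a b : ℝ}
    (hfq : f q = a) (hfv : f v = b) {t : ℝ} (ht0 : 0 ≤ t) (ht1 : t ≤ 1) :
    c * a + 1 / 2 * ‖q - w‖ ^ 2 ≤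
      c * (t * b + (1 - t) * a) + 1 / 2 * ‖q + t • (v - q) - w‖ ^ 2 := by
  have hpt : t • v + (1 - t) • q = q + t • (v - q) := by module
  have hconv := hconvex v q t ht0 ht1
  rw [hfv, hfq, hpt] at hconv
  have hmin := hq (t • v + (1 - t) • q)
  dsimp only at hmin
  rw [hfq, hpt] at hmin
  exact_mod_cast hmin.trans
    (add_le_add_left (mul_le_mul_of_nonneg_left hconv (EReal.coe_nonneg.mpr hc)) _)

theorem IsProxOf.isSubgradient {f : X → EReal}
    (hconvex : ∀ (x y : X) (t : ℝ), 0 ≤ t → t ≤ 1 →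
      f (t • x + (1 - t) • y) ≤ ((t : ℝ) : EReal) * f x + (((1 - t : ℝ)) : EReal) * f y)
    {c : ℝ} (hc : 0 < c) {w q : X} (hq : IsProxOf (fun u => (c : EReal) * f u) w q) {a : ℝ}
    (hfq : f q = a) : IsSubgradient f q (c⁻¹ • (w - q)) := by
  intro v
  rw [hfq, ← EReal.coe_add]
  induction hv : f v using EReal.rec with
  | bot =>
    have := hq v
    dsimp only at this
    rw [hv, hfq, EReal.coe_mul_bot_of_pos hc, EReal.bot_add, le_bot_iff] at this
    exact absurd this (by simp [← EReal.coe_mul, ← EReal.coe_add])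
  | top => exact le_top
  | coe b =>
    rw [EReal.coe_le_coe_iff]
    have hseg : ∀ t ∈ Ioc (0 : ℝ) 1, c * a + 1 / 2 * ‖q - w‖ ^ 2 ≤
        c * (t * b + (1 - t) * a) + 1 / 2 * ‖q + t • (v - q) - w‖ ^ 2 :=
      fun t ht => hq.le_along_segment hconvex hc.le hfq hv ht.1.le ht.2
    refine le_of_forall_mem_Ioc_le_add_mul (K := ‖v - q‖ ^ 2 / (2 * c)) fun t ht => ?_
    have hexp : ‖q + t • (v - q) - w‖ ^ 2
        = ‖q - w‖ ^ 2 - 2 * t * ⟪w - q, v - q⟫ + t ^ 2 * ‖v - q‖ ^ 2 := by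
      rw [show q + t • (v - q) - w = (q - w) + t • (v - q) by abel, norm_add_sq_real,
        real_inner_smul_right, norm_smul, Real.norm_eq_abs, mul_pow, sq_abs, ← neg_sub w q,
        inner_neg_left]
      ring
    have hdiv : t * (c * a + ⟪w - q, v - q⟫) ≤ t * (c * b + t / 2 * ‖v - q‖ ^ 2) := by
      linear_combination hseg t ht + (1 / 2 : ℝ) * hexp
    have key := le_of_mul_le_mul_left hdiv ht.1
    rw [real_inner_smul_left, ← mul_le_mul_iff_right₀ hc]
    field_simp
    linarith

theorem IsProxOf.eq_of_affine_minorant {g : X → EReal} {τ : ℝ} (hτ : 0 < τ) {x p : X}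
    (hp : IsProxOf (fun u => (τ : EReal) * g u) x p) {q : X} {a : ℝ}
    (hle : ∀ u, ((⟪q, u⟫ - a : ℝ) : EReal) ≤ g u)
    (heq : g (x - τ • q) = ((⟪q, x - τ • q⟫ - a : ℝ) : EReal)) : p = x - τ • q := by
  set s := x - τ • q
  have hmin := hp s
  dsimp only at hmin
  rw [heq] at hmin
  have h := (add_le_add_left
    (mul_le_mul_of_nonneg_left (hle p) (EReal.coe_nonneg.mpr hτ.le)) _).trans hmin
  norm_cast at h
  have hpx : ‖p - x‖ ^ 2 = ‖p - s‖ ^ 2 - 2 * τ * ⟪q, p - s⟫ + τ ^ 2 * ‖q‖ ^ 2 := by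
    rw [show p - x = (p - s) - τ • q by simp [s]; abel, norm_sub_sq_real, real_inner_smul_right,
      norm_smul, Real.norm_eq_abs, abs_of_pos hτ, real_inner_comm]
    ring
  have hsx : ‖s - x‖ ^ 2 = τ ^ 2 * ‖q‖ ^ 2 := by
    rw [show s - x = -(τ • q) by simp [s], norm_neg, norm_smul, Real.norm_eq_abs, abs_of_pos hτ]
    ring
  have hps : ‖p - s‖ ^ 2 ≤ 0 := by
    rw [hpx, hsx, inner_sub_right] at h
    nlinarith
  simpa [sub_eq_zero] using hps

end

theorem moreau_decomposition_general
    {X : Type*} [NormedAddCommGroup X] [InnerProductSpace ℝ X]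
    (f : X → EReal)
    (hproper : (∃ x, f x ≠ ⊤) ∧ ∀ x, f x ≠ ⊥)
    (hconvex : ∀ (x y : X) (t : ℝ), 0 ≤ t → t ≤ 1 →
      f (t • x + (1 - t) • y) ≤ ((t : ℝ) : EReal) * f x + (((1 - t : ℝ)) : EReal) * f y)
    (τ : ℝ) (hτ : 0 < τ) (x p q : X)
    (hp : IsProxOf (fun u => ((τ : ℝ) : EReal) * conjFn f u) x p)
    (hq : IsProxOf (fun u => ((τ⁻¹ : ℝ) : EReal) * f u) (τ⁻¹ • x) q) :
    x = p + τ • q := by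
  obtain ⟨⟨x₀, hx₀⟩, hbot⟩ := hproper
  have hτinv : 0 < τ⁻¹ := inv_pos.mpr hτ
  have hfq_top : f q ≠ ⊤ := by
    have := hq.ne_top (u := x₀) (by simp [EReal.mul_ne_top, hτinv.le, hτinv.not_ge, hx₀, hbot])
    simpa [EReal.mul_ne_top, hτinv.le, hτinv.not_ge, hbot] using this
  obtain ⟨a, hfq⟩ : ∃ a : ℝ, f q = a := ⟨_, (EReal.coe_toReal hfq_top (hbot q)).symm⟩
  have hsub : IsSubgradient f q (x - τ • q) := by
    simpa [smul_sub, smul_smul, hτ.ne'] using hq.isSubgradient hconvex hτinv hfq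
  have hminorant : ∀ u, ((⟪q, u⟫ - a : ℝ) : EReal) ≤ conjFn f u := fun u => by
    simpa [hfq] using le_conjFn f q u
  exact sub_eq_iff_eq_add.mp
    (hp.eq_of_affine_minorant hτ hminorant (hsub.conjFn_eq hfq)).symm

/-- Moreau decomposition: for a proper closed convex `f` and `τ > 0`,
every `x` satisfies `x = Prox_{τ f*}(x) + τ · Prox_{f/τ}(x/τ)`. -/
theorem moreau_decomposition
    {X : Type*} [NormedAddCommGroup X] [InnerProductSpace ℝ X] [FiniteDimensional ℝ X]
    (f : X → EReal)
    (hproper : (∃ x, f x ≠ ⊤) ∧ ∀ x, f x ≠ ⊥)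
    (hclosed : LowerSemicontinuous f)
    (hconvex : ∀ (x y : X) (t : ℝ), 0 ≤ t → t ≤ 1 →
      f (t • x + (1 - t) • y) ≤ ((t : ℝ) : EReal) * f x + (((1 - t : ℝ)) : EReal) * f y)
    (τ : ℝ) (hτ : 0 < τ) (x p q : X)
    (hp : IsProxOf (fun u => ((τ : ℝ) : EReal) * conjFn f u) x p)
    (hq : IsProxOf (fun u => ((τ⁻¹ : ℝ) : EReal) * f u) (τ⁻¹ • x) q) :
    x = p + τ • q :=
  moreau_decomposition_general f hproper hconvex τ hτ x p q hp hq

end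
end

section
/- Let D₁ and D₂ be self-adjoint positive semidefinite operators on finite-dimensional real inner product spaces U and V, F : X → U, G : X → V linear maps, and suppose D₁ ⪰ sqrt((F G*)(F G*)*) and D₂ ⪰ sqrt((G F*)(G F*)*). Then the block operator M = [[D₁, −F G*], [−G F*, D₂]] on U × V is positive semidefinite. -/
/-!
Write `A = F G*`, so that `S₁² = A A*` and `S₂² = A* A`. If `S₂ b = μ b` then
`S₁² (A b) = μ² A b`, and positivity of `S₁` forces `S₁ (A b) = μ A b`; on an eigenbasis of
`S₂` this gives `S₁ A = A S₂`. Split `v = S₂ y + k` with `S₂ k = 0`; then `A k = 0`, and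
`⟪u, S₁ u⟫ - 2 ⟪u, A v⟫ + ⟪v, S₂ v⟫` is exactly `⟪u - A y, S₁ (u - A y)⟫ ≥ 0`.
The majorisations `D₁ ⪰ S₁`, `D₂ ⪰ S₂` finish the proof.
-/

open ContinuousLinearMap RealInnerProductSpace

noncomputable section

section

variable {E F : Type*} [NormedAddCommGroup E] [InnerProductSpace ℝ E]
  [NormedAddCommGroup F] [InnerProductSpace ℝ F]

theorem IsPSD.isPositive {T : E →L[ℝ] E} (hT : IsPSD T) : T.IsPositive :=
  (isPositive_iff T).mpr ⟨hT.1, fun x => real_inner_comm x (T x) ▸ hT.2 x⟩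

theorem IsPSD.inner_le_inner_of_sub {S D : E →L[ℝ] E} (h : IsPSD (D - S)) (x : E) :
    ⟪x, S x⟫ ≤ ⟪x, D x⟫ := by
  have := h.2 x
  rw [sub_apply, inner_sub_right] at this
  linarith

namespace ContinuousLinearMap.IsPositive

theorem apply_eq_smul_of_apply_apply_eq_sq_smul {S : E →L[ℝ] E} (hS : S.IsPositive)
    {μ : ℝ} (hμ : 0 ≤ μ) {x : E} (hx : S (S x) = μ ^ 2 • x) : S x = μ • x := by
  rcases hμ.eq_or_lt with rfl | hμ
  · have : ⟪S x, S x⟫ = 0 := by rw [hS.inner_left_eq_inner_right, hx]; simp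
    simpa using this
  · set z := S x - μ • x
    have hSz : S z = -μ • z := by
      simp only [z, map_sub, map_smul, hx]
      module
    have hz := hS.inner_nonneg_right z
    rw [hSz, real_inner_smul_right, real_inner_self_eq_norm_sq] at hz
    have : ‖z‖ ^ 2 ≤ 0 := nonpos_of_mul_nonpos_right (by linarith) hμ
    simpa [z, sub_eq_zero] using this

theorem comp_eq_comp_of_sq_comp_eq_comp_sq [FiniteDimensional ℝ F] {S : E →L[ℝ] E}
    {T : F →L[ℝ] F} {A : F →L[ℝ] E} (hS : S.IsPositive) (hT : T.IsPositive)
    (h : (S ∘L S) ∘L A = A ∘L (T ∘L T)) : S ∘L A = A ∘L T := by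
  have hTs : (T : F →ₗ[ℝ] F).IsSymmetric := hT.isSymmetric
  let b := hTs.eigenvectorBasis rfl
  have hb (i) : T (b i) = hTs.eigenvalues rfl i • b i := hTs.apply_eigenvectorBasis rfl i
  refine coe_injective (b.toBasis.ext fun i => ?_)
  have hSSA : S (S (A (b i))) = hTs.eigenvalues rfl i ^ 2 • A (b i) := by
    simpa [hb, smul_smul, sq] using congr($h (b i))
  simp only [coe_coe, comp_apply, OrthonormalBasis.coe_toBasis, hb, map_smul]
  exact hS.apply_eq_smul_of_apply_apply_eq_sq_smul (hT.toLinearMap.nonneg_eigenvalues rfl i) hSSA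

theorem two_mul_inner_le [CompleteSpace E] [FiniteDimensional ℝ F] {S : E →L[ℝ] E}
    {T : F →L[ℝ] F} {A : F →L[ℝ] E} (hS : S.IsPositive) (hT : T.IsSymmetric)
    (hSA : S ∘L A = A ∘L T) (hA : adjoint A ∘L A = T ∘L T) (u : E) (v : F) :
    2 * ⟪u, A v⟫ ≤ ⟪u, S u⟫ + ⟪v, T v⟫ := by
  have hv : v ∈ LinearMap.range (T : F →ₗ[ℝ] F) ⊔ LinearMap.ker (T : F →ₗ[ℝ] F) := by
    rw [← hT.orthogonal_range, Submodule.sup_orthogonal_of_hasOrthogonalProjection]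
    trivial
  obtain ⟨_, ⟨y, rfl⟩, k, hk, rfl⟩ := Submodule.mem_sup.mp hv
  simp only [LinearMap.mem_ker, coe_coe] at hk ⊢
  have hAk : A k = 0 := by
    rw [← inner_self_eq_zero (𝕜 := ℝ), ← adjoint_inner_left, ← comp_apply, hA]
    simp [hk]
  have hSAy : S (A y) = A (T y + k) := by simp [hAk, ← comp_apply, hSA]
  have hAySAy : ⟪A y, S (A y)⟫ = ⟪T y + k, T (T y + k)⟫ := by
    rw [hSAy, ← adjoint_inner_left, ← comp_apply, hA, map_add T, hk, add_zero, real_inner_comm]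
    rfl
  have := hS.inner_nonneg_right (u - A y)
  rw [map_sub, inner_sub_left, inner_sub_right, inner_sub_right, hAySAy, hSAy,
    ← hS.inner_left_eq_inner_right (A y), hSAy, real_inner_comm u] at this
  linarith

end ContinuousLinearMap.IsPositive

end

theorem jacobi_block_psd_general
    {X U V : Type*}
    [NormedAddCommGroup X] [InnerProductSpace ℝ X] [FiniteDimensional ℝ X]
    [NormedAddCommGroup U] [InnerProductSpace ℝ U] [FiniteDimensional ℝ U]
    [NormedAddCommGroup V] [InnerProductSpace ℝ V] [FiniteDimensional ℝ V]
    (F : X →L[ℝ] U) (G : X →L[ℝ] V)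
    (D1 S1 : U →L[ℝ] U) (D2 S2 : V →L[ℝ] V)
    (hS1 : IsPSD S1) (hS2 : IsPSD S2)
    (hS1sq : S1.comp S1 = (F.comp (adjoint G)).comp (G.comp (adjoint F)))
    (hS2sq : S2.comp S2 = (G.comp (adjoint F)).comp (F.comp (adjoint G)))
    (hmaj1 : IsPSD (D1 - S1)) (hmaj2 : IsPSD (D2 - S2)) :
    ∀ (u : U) (v : V),
      0 ≤ ⟪u, D1 u⟫ - 2 * ⟪u, (F.comp (adjoint G)) v⟫ + ⟪v, D2 v⟫ := by
  intro u v
  have hadj : adjoint (F ∘L adjoint G) = G ∘L adjoint F := by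
    rw [adjoint_comp, adjoint_adjoint]
  have hSA : S1 ∘L (F ∘L adjoint G) = (F ∘L adjoint G) ∘L S2 :=
    hS1.isPositive.comp_eq_comp_of_sq_comp_eq_comp_sq hS2.isPositive
      (by rw [hS1sq, hS2sq, comp_assoc])
  have hkey := hS1.isPositive.two_mul_inner_le hS2.isPositive.isSymmetric hSA
    (by rw [hadj, hS2sq]) u v
  linarith [hmaj1.inner_le_inner_of_sub u, hmaj2.inner_le_inner_of_sub v]

/-- If `D₁ ⪰ sqrt((F G*)(F G*)*)` and `D₂ ⪰ sqrt((G F*)(G F*)*)` then the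
block operator `M = [[D₁, −F G*], [−G F*, D₂]]` is positive semidefinite
(expressed through its quadratic form on `U × V`). Here `S₁, S₂` are the
positive semidefinite square roots of `(F G*)(F G*)*` and `(G F*)(G F*)*`. -/
theorem jacobi_block_psd
    {X U V : Type*}
    [NormedAddCommGroup X] [InnerProductSpace ℝ X] [FiniteDimensional ℝ X]
    [NormedAddCommGroup U] [InnerProductSpace ℝ U] [FiniteDimensional ℝ U]
    [NormedAddCommGroup V] [InnerProductSpace ℝ V] [FiniteDimensional ℝ V]
    (F : X →L[ℝ] U) (G : X →L[ℝ] V)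
    (D1 S1 : U →L[ℝ] U) (D2 S2 : V →L[ℝ] V)
    (hD1 : IsPSD D1) (hD2 : IsPSD D2) (hS1 : IsPSD S1) (hS2 : IsPSD S2)
    (hS1sq : S1.comp S1 = (F.comp (adjoint G)).comp (G.comp (adjoint F)))
    (hS2sq : S2.comp S2 = (G.comp (adjoint F)).comp (F.comp (adjoint G)))
    (hmaj1 : IsPSD (D1 - S1)) (hmaj2 : IsPSD (D2 - S2)) :
    ∀ (u : U) (v : V),
      0 ≤ ⟪u, D1 u⟫ - 2 * ⟪u, (F.comp (adjoint G)) v⟫ + ⟪v, D2 v⟫ :=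
  jacobi_block_psd_general F G D1 S1 D2 S2 hS1 hS2 hS1sq hS2sq hmaj1 hmaj2

end
end

section
/- Let f : U → (−∞, +∞] be proper closed convex, F : X → U, G : X → V linear maps between finite-dimensional real inner product spaces, g(v) = (1/2)⟨v, Σ_g v⟩ − ⟨b, v⟩ convex quadratic, σ > 0, c ∈ X, x̄ ∈ X, ū ∈ dom f, v̄ ∈ V. Let E_g ⪰ σ⁻¹Σ_g + G G* be positive definite, T_g := E_g − σ⁻¹Σ_g − G G*, T_f ⪰ 0 with F F* + σ⁻¹Σ_f + T_f positive definite, T̂_f := T_f + F G* E_g⁻¹ G F*. Define the augmented Lagrangian L_σ(u, v; x) = f(u) + g(v) + ⟨x, F* u + G* v − c⟩ + (σ/2)‖F* u + G* v − c‖². Let δ̄ := F G* E_g⁻¹ (b − G x̄ − Σ_g v̄ + σ G(c − F* ū − G* v̄)) and ᾱ := σ⁻¹ b + T_g v̄ + G(c − σ⁻¹ x̄). Then the joint minimizer (u⁺, v⁺) of (u,v) ↦ L_σ(u,v; x̄) + (σ/2)‖u − ū‖²_{T̂_f} + (σ/2)‖v − v̄‖²_{T_g} satisfies: u⁺ = argmin_u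 { L_σ(u, v̄; x̄) + ⟨δ̄, u⟩ + (σ/2)‖u − ū‖²_{T_f} } and v⁺ = E_g⁻¹(ᾱ − G F* u⁺). -/
/-!
Let `Φ(u, v)` be the smooth part of the joint objective. For fixed `u`, `Φ(u, ·)` is a quadratic
with Hessian `σ E_g`, so `Φ(u, v) = Φ(u, v(u)) + (σ/2)‖v - v(u)‖²_{E_g}` with
`v(u) = E_g⁻¹(ᾱ - G F* u)`. Hence `v⁺ = v(u⁺)` and `u⁺` minimizes `f + Φ(·, v(·))`. Since
`E_g(v̄ - v(u)) = G F*(u - ū) - σ⁻¹ d̄`, where `δ̄ = F G* E_g⁻¹ d̄`, the correction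
`Φ(u, v(u)) - Φ(u, v̄) = -(σ/2)‖v̄ - v(u)‖²_{E_g}` has quadratic part cancelling the term
`F G* E_g⁻¹ G F*` of `T̂_f` and linear part `⟨δ̄, u⟩`, so `Φ(u, v(u))` is the objective of the
`u`-subproblem plus a constant.
-/

open ContinuousLinearMap RealInnerProductSpace

noncomputable section

theorem minimizer_of_joint_minimizer {U V : Type*} (f : U → EReal) (hf_top : ∃ u, f u ≠ ⊤)
    (hf_bot : ∀ u, f u ≠ ⊥) {Φ : U → V → ℝ} {ψ : U → ℝ} {w : U → V} (C : ℝ)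
    (hw : ∀ u v, v ≠ w u → Φ u (w u) < Φ u v) (hψ : ∀ u, Φ u (w u) = ψ u + C)
    {up : U} {vp : V} (hmin : ∀ u v, f up + (Φ up vp : EReal) ≤ f u + Φ u v) :
    (∀ u, f up + (ψ up : EReal) ≤ f u + ψ u) ∧ vp = w up := by
  obtain ⟨u₀, hu₀⟩ := hf_top
  have hup : f up ≠ ⊤ := by
    intro htop
    have h := hmin u₀ (w u₀)
    rw [htop, EReal.top_add_coe, top_le_iff] at h
    exact EReal.add_ne_top hu₀ (EReal.coe_ne_top _) h
  lift f up to ℝ using ⟨hup, hf_bot up⟩ with p hp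
  have hvp : vp = w up := by
    by_contra hne
    have h := hmin up (w up)
    rw [← hp, ← EReal.coe_add, ← EReal.coe_add, EReal.coe_le_coe_iff] at h
    linarith [hw up vp hne]
  refine ⟨fun u => ?_, hvp⟩
  have h := hmin u (w u)
  rwa [hvp, hψ, hψ, EReal.coe_add, EReal.coe_add, ← add_assoc, ← add_assoc,
    (EReal.addLECancellable_coe C).add_le_add_iff_right] at h

section SymmetricOperators

variable {V : Type*} [NormedAddCommGroup V] [InnerProductSpace ℝ V]

theorem LinearMap.IsSymmetric.of_rightInverse {A B : V →ₗ[ℝ] V} (hA : A.IsSymmetric)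
    (hAB : ∀ y, A (B y) = y) : B.IsSymmetric := fun x y => by
  calc ⟪B x, y⟫ = ⟪B x, A (B y)⟫ := by rw [hAB]
    _ = ⟪x, B y⟫ := by rw [← hA, hAB]

theorem LinearMap.IsSymmetric.inner_map_self_sub_inner_map_self {A : V →ₗ[ℝ] V}
    (hA : A.IsSymmetric) (v w : V) :
    ⟪v, A v⟫ - ⟪w, A w⟫ = ⟪v - w, A (v - w)⟫ + 2 * ⟪A w, v - w⟫ := by
  simp only [map_sub, inner_sub_left, inner_sub_right, hA w v, real_inner_comm (A w)]
  ring

theorem isSymmetric_comp_adjoint {X : Type*} [NormedAddCommGroup X] [InnerProductSpace ℝ X]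
    [CompleteSpace X] [CompleteSpace V] (G : X →L[ℝ] V) :
    ((G ∘L adjoint G : V →L[ℝ] V) : V →ₗ[ℝ] V).IsSymmetric := fun x y => by
  simp only [coe_coe, comp_apply]
  rw [← adjoint_inner_right, adjoint_inner_left]

theorem isSymmetric_sub_smul_sub_comp_adjoint {X : Type*} [NormedAddCommGroup X]
    [InnerProductSpace ℝ X] [CompleteSpace X] [CompleteSpace V] {E S : V →L[ℝ] V}
    (hE : (E : V →ₗ[ℝ] V).IsSymmetric) (hS : (S : V →ₗ[ℝ] V).IsSymmetric) (t : ℝ)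
    (G : X →L[ℝ] V) : ((E - t • S - G ∘L adjoint G : V →L[ℝ] V) : V →ₗ[ℝ] V).IsSymmetric := by
  simpa using (hE.sub (hS.smul (conj_trivial t))).sub (isSymmetric_comp_adjoint G)

end SymmetricOperators

section AugmentedLagrangian

variable {X V : Type*} [NormedAddCommGroup X] [InnerProductSpace ℝ X] [CompleteSpace X]
  [NormedAddCommGroup V] [InnerProductSpace ℝ V] [CompleteSpace V]
  (G : X →L[ℝ] V) (Sg Tg : V →L[ℝ] V) (b : V) {σ : ℝ} (c xbar : X) (vbar : V)

theorem augLagrangian_add_prox_eq_quadratic (hTg : (Tg : V →ₗ[ℝ] V).IsSymmetric) (hσ : σ ≠ 0)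
    (a : X) (v : V) :
    ((1/2) * ⟪v, Sg v⟫ - ⟪b, v⟫) + ⟪xbar, a + adjoint G v - c⟫
        + (σ/2) * ‖a + adjoint G v - c‖ ^ 2 + (σ/2) * ⟪v - vbar, Tg (v - vbar)⟫
      = (σ/2) * ⟪v, (Tg + σ⁻¹ • Sg + G ∘L adjoint G) v⟫
          - σ * ⟪σ⁻¹ • b + Tg vbar + G (c - σ⁻¹ • xbar) - G a, v⟫
          + (⟪xbar, a - c⟫ + (σ/2) * ‖a - c‖ ^ 2 + (σ/2) * ⟪vbar, Tg vbar⟫) := by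
  rw [show a + adjoint G v - c = (a - c) + adjoint G v by abel,
    ← real_inner_self_eq_norm_sq, ← real_inner_self_eq_norm_sq]
  simp only [inner_add_left, inner_add_right, inner_sub_left, inner_sub_right,
    real_inner_smul_left, real_inner_smul_right, map_add, map_sub, map_smul,
    add_apply, smul_apply, comp_apply, adjoint_inner_left, adjoint_inner_right]
  have hs : σ * σ⁻¹ = 1 := mul_inv_cancel₀ hσ
  linear_combination (-(1/2) * ⟪v, Sg v⟫ + ⟪b, v⟫ - ⟪G xbar, v⟫) * hs
    + (σ/2) * real_inner_comm (G a) v - (σ/2) * real_inner_comm (G c) v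
    - (σ/2) * real_inner_comm (G (adjoint G v)) v
    + (σ/2) * hTg vbar v - (σ/2) * real_inner_comm (Tg vbar) v

theorem augLagrangian_add_prox_eq_add_sq {Eg : V →L[ℝ] V} (hTg : (Tg : V →ₗ[ℝ] V).IsSymmetric)
    (hEg : (Eg : V →ₗ[ℝ] V).IsSymmetric) (hTgEg : Tg + σ⁻¹ • Sg + G ∘L adjoint G = Eg)
    (hσ : σ ≠ 0) (a : X) (v w : V)
    (hw : Eg w = σ⁻¹ • b + Tg vbar + G (c - σ⁻¹ • xbar) - G a) :
    ((1/2) * ⟪v, Sg v⟫ - ⟪b, v⟫) + ⟪xbar, a + adjoint G v - c⟫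
        + (σ/2) * ‖a + adjoint G v - c‖ ^ 2 + (σ/2) * ⟪v - vbar, Tg (v - vbar)⟫
      = ((1/2) * ⟪w, Sg w⟫ - ⟪b, w⟫) + ⟪xbar, a + adjoint G w - c⟫
        + (σ/2) * ‖a + adjoint G w - c‖ ^ 2 + (σ/2) * ⟪w - vbar, Tg (w - vbar)⟫
        + (σ/2) * ⟪v - w, Eg (v - w)⟫ := by
  have hsq := hEg.inner_map_self_sub_inner_map_self v w
  simp only [coe_coe, hw] at hsq
  rw [augLagrangian_add_prox_eq_quadratic G Sg Tg b c xbar vbar hTg hσ,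
    augLagrangian_add_prox_eq_quadratic G Sg Tg b c xbar vbar hTg hσ, hTgEg, hw]
  linear_combination (σ/2) * hsq
    + σ * inner_sub_right (𝕜 := ℝ) (σ⁻¹ • b + Tg vbar + G (c - σ⁻¹ • xbar) - G a) v w

end AugmentedLagrangian

section SchurComplement

variable {V : Type*} [NormedAddCommGroup V] [InnerProductSpace ℝ V]

theorem prox_inv_sub_prox_eq_affine {Eg Eginv : V →L[ℝ] V} (hEg : (Eg : V →ₗ[ℝ] V).IsSymmetric)
    (hinv1 : Eg ∘L Eginv = 1) (hinv2 : Eginv ∘L Eg = 1) {σ : ℝ} (hσ : σ ≠ 0)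
    {vbar α ybar d : V} (hd : σ • (ybar + Eg vbar - α) = -d) (y : V) :
    (σ/2) * ⟪y - ybar, Eginv (y - ybar)⟫
        - (σ/2) * ⟪vbar - Eginv (α - y), Eg (vbar - Eginv (α - y))⟫
      = ⟪Eginv d, y⟫ - (⟪Eginv d, ybar⟫ + (2 * σ)⁻¹ * ⟪Eginv d, d⟫) := by
  have hEgEginv (z : V) : Eg (Eginv z) = z := by simpa using congr($hinv1 z)
  have hEginvEg (z : V) : Eginv (Eg z) = z := by simpa using congr($hinv2 z)
  have hEginv (a b : V) : ⟪Eginv a, b⟫ = ⟪a, Eginv b⟫ := hEg.of_rightInverse hEgEginv a b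
  have hσd : σ⁻¹ • d = -(ybar + Eg vbar - α) := by
    rw [← neg_neg d, ← hd, smul_neg, smul_smul, inv_mul_cancel₀ hσ, one_smul]
  have hv : vbar - Eginv (α - y) = Eginv ((y - ybar) - σ⁻¹ • d) := by
    rw [hσd, show y - ybar - -(ybar + Eg vbar - α) = Eg vbar - (α - y) by abel,
      map_sub Eginv (Eg vbar), hEginvEg]
  rw [hv, hEgEginv]
  simp only [map_sub, map_smul, inner_sub_left, inner_sub_right, real_inner_smul_left,
    real_inner_smul_right]
  have hs : σ * σ⁻¹ = 1 := mul_inv_cancel₀ hσ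
  linear_combination (σ/2) * (real_inner_comm (Eginv y) y - (hEginv ybar y).symm
      - (hEginv y ybar).symm + real_inner_comm (Eginv ybar) ybar)
    + (σ/2) * σ⁻¹ * ((hEginv y d).trans (real_inner_comm _ _)
      - (hEginv ybar d).trans (real_inner_comm _ _))
    + (⟪Eginv d, y⟫ - ⟪Eginv d, ybar⟫ - σ⁻¹/2 * ⟪Eginv d, d⟫) * hs

end SchurComplement

theorem scb_joint_prox_characterization_general
    {X U V : Type*}
    [NormedAddCommGroup X] [InnerProductSpace ℝ X] [FiniteDimensional ℝ X]
    [NormedAddCommGroup U] [InnerProductSpace ℝ U] [FiniteDimensional ℝ U]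
    [NormedAddCommGroup V] [InnerProductSpace ℝ V] [FiniteDimensional ℝ V]
    (f : U → EReal)
    (hproper : (∃ u, f u ≠ ⊤) ∧ ∀ u, f u ≠ ⊥)
    (F : X →L[ℝ] U) (G : X →L[ℝ] V)
    (Sg : V →L[ℝ] V) (hSg : IsPSD Sg)
    (b : V) (σ : ℝ) (hσ : 0 < σ) (c xbar : X)
    (ubar : U) (vbar : V)
    (Eg Eginv : V →L[ℝ] V) (hEg : IsPD Eg)
    (hinv1 : Eg.comp Eginv = 1) (hinv2 : Eginv.comp Eg = 1)
    (Tf : U →L[ℝ] U)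
    (up : U) (vp : V) :
    let Tg : V →L[ℝ] V := Eg - σ⁻¹ • Sg - G.comp (adjoint G)
    let Tfhat : U →L[ℝ] U :=
      Tf + F.comp ((adjoint G).comp (Eginv.comp (G.comp (adjoint F))))
    let g : V → ℝ := fun v => (1/2) * ⟪v, Sg v⟫ - ⟪b, v⟫
    let L : U → V → ℝ := fun u v =>
      g v + ⟪xbar, (adjoint F) u + (adjoint G) v - c⟫
        + (σ/2) * ‖(adjoint F) u + (adjoint G) v - c‖ ^ 2
    let δ : U := F ((adjoint G) (Eginv
      (b - G xbar - Sg vbar + σ • (G (c - (adjoint F) ubar - (adjoint G) vbar)))))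
    let α : V := σ⁻¹ • b + Tg vbar + G (c - σ⁻¹ • xbar)
    -- `(up, vp)` jointly minimizes the proximal augmented Lagrangian
    (∀ (u : U) (v : V),
        f up + ((L up vp + (σ/2) * ⟪up - ubar, Tfhat (up - ubar)⟫
            + (σ/2) * ⟪vp - vbar, Tg (vp - vbar)⟫ : ℝ) : EReal)
          ≤ f u + ((L u v + (σ/2) * ⟪u - ubar, Tfhat (u - ubar)⟫
            + (σ/2) * ⟪v - vbar, Tg (v - vbar)⟫ : ℝ) : EReal)) →
    -- then `up` minimizes the `u`-subproblem with the extra linear term `⟨δ, ·⟩`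
    ((∀ u : U,
        f up + ((L up vbar + ⟪δ, up⟫
            + (σ/2) * ⟪up - ubar, Tf (up - ubar)⟫ : ℝ) : EReal)
          ≤ f u + ((L u vbar + ⟪δ, u⟫
            + (σ/2) * ⟪u - ubar, Tf (u - ubar)⟫ : ℝ) : EReal)) ∧
      vp = Eginv (α - G ((adjoint F) up))) := by
  intro Tg Tfhat g L δ α hjoint
  have hTg : (Tg : V →ₗ[ℝ] V).IsSymmetric :=
    isSymmetric_sub_smul_sub_comp_adjoint hEg.1 hSg.1 σ⁻¹ G
  have hTgEg : Tg + σ⁻¹ • Sg + G ∘L adjoint G = Eg := by simp only [Tg]; abel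
  have hEgEginv (y : V) : Eg (Eginv y) = y := by simpa using congr($hinv1 y)
  set d := b - G xbar - Sg vbar + σ • G (c - adjoint F ubar - adjoint G vbar)
  have hd : σ • (G (adjoint F ubar) + Eg vbar - α) = -d := by
    simp only [α, Tg, d, sub_apply, smul_apply, comp_apply, map_sub, map_smul, smul_sub,
      smul_add, smul_smul, mul_inv_cancel₀ hσ.ne', one_smul, neg_add, neg_sub]
    abel
  have hsplit (u : U) (v : V) := augLagrangian_add_prox_eq_add_sq G Sg Tg b c xbar vbar hTg
    hEg.1 hTgEg hσ.ne' (adjoint F u) v (Eginv (α - G (adjoint F u))) (hEgEginv _)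
  refine minimizer_of_joint_minimizer f hproper.1 hproper.2
    (Φ := fun u v => L u v + (σ/2) * ⟪u - ubar, Tfhat (u - ubar)⟫
      + (σ/2) * ⟪v - vbar, Tg (v - vbar)⟫)
    (ψ := fun u => L u vbar + ⟪δ, u⟫ + (σ/2) * ⟪u - ubar, Tf (u - ubar)⟫)
    (w := fun u => Eginv (α - G (adjoint F u)))
    (-(⟪Eginv d, G (adjoint F ubar)⟫ + (2 * σ)⁻¹ * ⟪Eginv d, d⟫)) (fun u v hne => ?_)
    (fun u => ?_) hjoint
  · have hpos := hEg.2 _ (sub_ne_zero.mpr hne)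
    simp only [L, g]
    linarith [hsplit u v, mul_pos (half_pos hσ) hpos]
  · have hTfhat : ⟪u - ubar, Tfhat (u - ubar)⟫ = ⟪u - ubar, Tf (u - ubar)⟫
        + ⟪G (adjoint F u) - G (adjoint F ubar), Eginv (G (adjoint F u) - G (adjoint F ubar))⟫ := by
      simp only [Tfhat, add_apply, comp_apply, inner_add_right, ← adjoint_inner_left F,
        adjoint_inner_right G, map_sub (adjoint F), map_sub G]
    have hδ : ⟪δ, u⟫ = ⟪Eginv d, G (adjoint F u)⟫ := by
      rw [← adjoint_inner_right, adjoint_inner_left]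
    have hsplit_vbar := hsplit u vbar
    rw [sub_self, inner_zero_left, mul_zero, add_zero] at hsplit_vbar
    simp only [L, g, hTfhat, hδ]
    linarith [prox_inv_sub_prox_eq_affine hEg.1 hinv1 hinv2 hσ.ne' hd (G (adjoint F u))]

/-- The Schur-complement-based joint proximal minimization of the augmented
Lagrangian: the joint minimizer `(u⁺, v⁺)` of
`(u,v) ↦ L_σ(u,v; x̄) + (σ/2)‖u − ū‖²_{T̂_f} + (σ/2)‖v − v̄‖²_{T_g}`
satisfies `u⁺ = argmin_u { L_σ(u, v̄; x̄) + ⟨δ̄, u⟩ + (σ/2)‖u − ū‖²_{T_f} }`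
and `v⁺ = E_g⁻¹(ᾱ − G F* u⁺)`. -/
theorem scb_joint_prox_characterization
    {X U V : Type*}
    [NormedAddCommGroup X] [InnerProductSpace ℝ X] [FiniteDimensional ℝ X]
    [NormedAddCommGroup U] [InnerProductSpace ℝ U] [FiniteDimensional ℝ U]
    [NormedAddCommGroup V] [InnerProductSpace ℝ V] [FiniteDimensional ℝ V]
    (f : U → EReal)
    (hproper : (∃ u, f u ≠ ⊤) ∧ ∀ u, f u ≠ ⊥)
    (hclosed : LowerSemicontinuous f)
    (hconvex : ∀ (u u' : U) (t : ℝ), 0 ≤ t → t ≤ 1 →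
      f (t • u + (1 - t) • u') ≤ ((t : ℝ) : EReal) * f u + (((1 - t : ℝ)) : EReal) * f u')
    (F : X →L[ℝ] U) (G : X →L[ℝ] V)
    (Sf : U →L[ℝ] U) (Sg : V →L[ℝ] V) (hSf : IsPSD Sf) (hSg : IsPSD Sg)
    (b : V) (σ : ℝ) (hσ : 0 < σ) (c xbar : X)
    (ubar : U) (hubar : f ubar ≠ ⊤) (vbar : V)
    (Eg Eginv : V →L[ℝ] V) (hEg : IsPD Eg)
    (hmaj : IsPSD (Eg - (σ⁻¹ • Sg + G.comp (adjoint G))))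
    (hinv1 : Eg.comp Eginv = 1) (hinv2 : Eginv.comp Eg = 1)
    (Tf : U →L[ℝ] U) (hTf : IsPSD Tf)
    (hpd : IsPD (F.comp (adjoint F) + σ⁻¹ • Sf + Tf))
    (up : U) (vp : V) :
    let Tg : V →L[ℝ] V := Eg - σ⁻¹ • Sg - G.comp (adjoint G)
    let Tfhat : U →L[ℝ] U :=
      Tf + F.comp ((adjoint G).comp (Eginv.comp (G.comp (adjoint F))))
    let g : V → ℝ := fun v => (1/2) * ⟪v, Sg v⟫ - ⟪b, v⟫
    let L : U → V → ℝ := fun u v =>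
      g v + ⟪xbar, (adjoint F) u + (adjoint G) v - c⟫
        + (σ/2) * ‖(adjoint F) u + (adjoint G) v - c‖ ^ 2
    let δ : U := F ((adjoint G) (Eginv
      (b - G xbar - Sg vbar + σ • (G (c - (adjoint F) ubar - (adjoint G) vbar)))))
    let α : V := σ⁻¹ • b + Tg vbar + G (c - σ⁻¹ • xbar)
    -- `(up, vp)` jointly minimizes the proximal augmented Lagrangian
    (∀ (u : U) (v : V),
        f up + ((L up vp + (σ/2) * ⟪up - ubar, Tfhat (up - ubar)⟫
            + (σ/2) * ⟪vp - vbar, Tg (vp - vbar)⟫ : ℝ) : EReal)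
          ≤ f u + ((L u v + (σ/2) * ⟪u - ubar, Tfhat (u - ubar)⟫
            + (σ/2) * ⟪v - vbar, Tg (v - vbar)⟫ : ℝ) : EReal)) →
    -- then `up` minimizes the `u`-subproblem with the extra linear term `⟨δ, ·⟩`
    ((∀ u : U,
        f up + ((L up vbar + ⟪δ, up⟫
            + (σ/2) * ⟪up - ubar, Tf (up - ubar)⟫ : ℝ) : EReal)
          ≤ f u + ((L u vbar + ⟪δ, u⟫
            + (σ/2) * ⟪u - ubar, Tf (u - ubar)⟫ : ℝ) : EReal)) ∧
      vp = Eginv (α - G ((adjoint F) up))) :=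
  scb_joint_prox_characterization_general f hproper F G Sg hSg b σ hσ c xbar ubar vbar Eg Eginv hEg
    hinv1 hinv2 Tf up vp
end
end

section
/- Let F_{i} be the stacked linear map (F; A₁; …; A_{i−1}) : X → U × Y₁ × ⋯ × Y_{i−1} and define recursively T̂_{f_1} := T_f + F₁ A₁* E_{θ_1}⁻¹ A₁ F₁* and T̂_{f_i} := diag(T̂_{f_{i−1}}, T_{θ_{i−1}}) + F_i A_i* E_{θ_i}⁻¹ A_i F_i* for i = 2, …, p, where each E_{θ_i} ⪰ σ⁻¹ P_i + A_i A_i* is positive definite and T_{θ_i} := E_{θ_i} − σ⁻¹ P_i − A_i A_i* ⪰ 0. Then F_{p+1} F_{p+1}* + σ⁻¹ Σ_{f_{p+1}} + diag(T̂_{f_p}, T_{θ_p}) is positive definite if and only if F F* + σ⁻¹ Σ_f + T_f is positive definite, where Σ_{f_{p+1}} := diag(Σ_f, P₁, …, P_p). -/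
open ContinuousLinearMap RealInnerProductSpace

noncomputable section

/-- The inverse of a positive definite operator is positive definite. -/
lemma isPD_of_inv {W : Type*} [NormedAddCommGroup W] [InnerProductSpace ℝ W]
    (E Einv : W →L[ℝ] W) (hE : IsPD E)
    (h1 : E.comp Einv = 1) (_h2 : Einv.comp E = 1) : IsPD Einv := by
  have h1' : ∀ x, E (Einv x) = x := fun x =>
    congrArg (fun f : W →L[ℝ] W => f x) h1
  constructor
  · intro x y
    conv_lhs => rw [← h1' y]
    rw [← hE.1 (Einv x) (Einv y), h1' x]
  · intro x hx
    have hvx : Einv x ≠ 0 := by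
      intro h
      apply hx
      rw [← h1' x, h, map_zero]
    have := hE.2 (Einv x) hvx
    calc (0:ℝ) < ⟪Einv x, E (Einv x)⟫ := this
    _ = ⟪E (Einv x), Einv x⟫ := (hE.1 _ _).symm
    _ = ⟪x, Einv x⟫ := by rw [h1' x]

set_option maxHeartbeats 1000000 in
/-- Multi-block Schur complement reduction: with the recursively defined
proximal terms `T̂_{f_i}`, the block operator
`F_{p+1} F_{p+1}* + σ⁻¹ Σ_{f_{p+1}} + diag(T̂_{f_p}, T_{θ_p})` (expressed
through its quadratic form on `U × Y₁ × ⋯ × Y_p`, where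
`s_i(u,y) = F* u + ∑_{j<i} A_j* y_j`) is positive definite iff
`F F* + σ⁻¹ Σ_f + T_f` is positive definite. -/
theorem multiblock_schur_posdef_iff
    {p : ℕ} {X U : Type*} {Y : Fin p → Type*}
    [NormedAddCommGroup X] [InnerProductSpace ℝ X] [FiniteDimensional ℝ X]
    [NormedAddCommGroup U] [InnerProductSpace ℝ U] [FiniteDimensional ℝ U]
    [∀ i, NormedAddCommGroup (Y i)] [∀ i, InnerProductSpace ℝ (Y i)]
    [∀ i, FiniteDimensional ℝ (Y i)]
    (F : X →L[ℝ] U) (A : ∀ i, X →L[ℝ] Y i)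
    (σ : ℝ) (hσ : 0 < σ)
    (Sf Tf : U →L[ℝ] U) (hSf : IsPSD Sf) (hTf : IsPSD Tf)
    (P : ∀ i, Y i →L[ℝ] Y i) (hP : ∀ i, IsPSD (P i))
    (E Einv : ∀ i, Y i →L[ℝ] Y i) (hE : ∀ i, IsPD (E i))
    (hmaj : ∀ i, IsPSD (E i - (σ⁻¹ • P i + (A i).comp (adjoint (A i)))))
    (hinv1 : ∀ i, (E i).comp (Einv i) = 1)
    (hinv2 : ∀ i, (Einv i).comp (E i) = 1) :
    let T : ∀ i, Y i →L[ℝ] Y i :=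
      fun i => E i - σ⁻¹ • P i - (A i).comp (adjoint (A i))
    let s : U → (∀ i, Y i) → Fin p → X := fun u y i =>
      (adjoint F) u + ∑ j ∈ Finset.univ.filter (fun j => j < i),
        (adjoint (A j)) (y j)
    ((∀ (u : U) (y : ∀ i, Y i), ¬(u = 0 ∧ y = 0) →
        0 < ‖(adjoint F) u + ∑ i, (adjoint (A i)) (y i)‖ ^ 2
            + σ⁻¹ * (⟪u, Sf u⟫ + ∑ i, ⟪y i, (P i) (y i)⟫)
            + ⟪u, Tf u⟫ + ∑ i, ⟪y i, (T i) (y i)⟫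
            + ∑ i, ⟪(A i) (s u y i), (Einv i) ((A i) (s u y i))⟫)
      ↔ IsPD (F.comp (adjoint F) + σ⁻¹ • Sf + Tf)) := by
  intro T s
  have hσ' : 0 < σ⁻¹ := inv_pos.mpr hσ
  have hEinv : ∀ i, IsPD (Einv i) := fun i =>
    isPD_of_inv _ _ (hE i) (hinv1 i) (hinv2 i)
  -- positivity of T i quadratic form
  have hTpsd : ∀ i (v : Y i), 0 ≤ ⟪v, T i v⟫ := by
    intro i v
    have h := (hmaj i).2 v
    have : T i = E i - (σ⁻¹ • P i + (A i).comp (adjoint (A i))) := by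
      show E i - σ⁻¹ • P i - (A i).comp (adjoint (A i)) = _
      rw [sub_sub]
    rw [this]
    exact h
  -- quadratic form of M
  have hMquad : ∀ v : U, ⟪v, (F.comp (adjoint F) + σ⁻¹ • Sf + Tf) v⟫
      = ‖adjoint F v‖ ^ 2 + σ⁻¹ * ⟪v, Sf v⟫ + ⟪v, Tf v⟫ := by
    intro v
    have hkey : ⟪v, F ((adjoint F) v)⟫ = ‖(adjoint F) v‖ ^ 2 := by
      rw [real_inner_comm, ← ContinuousLinearMap.adjoint_inner_right F,
        real_inner_self_eq_norm_sq]
    simp only [ContinuousLinearMap.add_apply, ContinuousLinearMap.smul_apply,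
      ContinuousLinearMap.comp_apply, inner_add_right, real_inner_smul_right, hkey]
  have hMpsd : ∀ v : U, 0 ≤ ⟪v, (F.comp (adjoint F) + σ⁻¹ • Sf + Tf) v⟫ := by
    intro v
    rw [hMquad v]
    have := hSf.2 v
    have := hTf.2 v
    have := sq_nonneg ‖adjoint F v‖
    nlinarith
  have hMsym : ∀ x y : U, ⟪(F.comp (adjoint F) + σ⁻¹ • Sf + Tf) x, y⟫
      = ⟪x, (F.comp (adjoint F) + σ⁻¹ • Sf + Tf) y⟫ := by
    intro x y
    simp only [ContinuousLinearMap.add_apply, ContinuousLinearMap.smul_apply,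
      ContinuousLinearMap.comp_apply, inner_add_left, inner_add_right,
      real_inner_smul_left, real_inner_smul_right]
    rw [hSf.1 x y, hTf.1 x y]
    congr 2
    calc ⟪F ((adjoint F) x), y⟫
        = ⟪(adjoint F) x, (adjoint F) y⟫ :=
          (ContinuousLinearMap.adjoint_inner_right F _ _).symm
      _ = ⟪(adjoint F) y, (adjoint F) x⟫ := real_inner_comm _ _
      _ = ⟪F ((adjoint F) y), x⟫ := ContinuousLinearMap.adjoint_inner_right F _ _
      _ = ⟪x, F ((adjoint F) y)⟫ := real_inner_comm _ _
  constructor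
  · -- forward: quadratic form positive ⟹ M PD
    intro h
    refine ⟨hMsym, fun u hu => ?_⟩
    rcases lt_or_eq_of_le (hMpsd u) with h0 | h0
    · exact h0
    exfalso
    rw [hMquad u] at h0
    have hfn : (0:ℝ) ≤ ‖adjoint F u‖ ^ 2 := sq_nonneg _
    have hs1 : (0:ℝ) ≤ ⟪u, Sf u⟫ := hSf.2 u
    have ht1 : (0:ℝ) ≤ ⟪u, Tf u⟫ := hTf.2 u
    have hF0 : ‖adjoint F u‖ ^ 2 = 0 := by nlinarith
    have hSf0 : ⟪u, Sf u⟫ = 0 := by nlinarith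
    have hTf0 : ⟪u, Tf u⟫ = 0 := by nlinarith
    have hFu : adjoint F u = 0 := by
      rw [pow_eq_zero_iff (two_ne_zero), norm_eq_zero] at hF0
      exact hF0
    have := h u 0 (by simp [hu])
    simp only [Pi.zero_apply, map_zero, inner_zero_right, Finset.sum_const_zero,
      add_zero] at this
    have hsz : ∀ i : Fin p, s u 0 i = 0 := by
      intro i
      show adjoint F u + ∑ j ∈ Finset.univ.filter (fun j => j < i),
        (adjoint (A j)) ((0 : ∀ i, Y i) j) = 0
      simp [hFu]
    rw [hFu] at this
    simp only [hsz, map_zero, inner_zero_right, Finset.sum_const_zero] at this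
    rw [hSf0, hTf0] at this
    norm_num at this
  · -- backward: M PD ⟹ quadratic form positive
    intro hM u y hne
    by_contra hle
    push_neg at hle
    -- nonnegativity of each of the five terms
    have e1 : (0:ℝ) ≤ ‖(adjoint F) u + ∑ i, (adjoint (A i)) (y i)‖ ^ 2 := sq_nonneg _
    have e2a : (0:ℝ) ≤ ⟪u, Sf u⟫ := hSf.2 u
    have e2b : (0:ℝ) ≤ ∑ i, ⟪y i, (P i) (y i)⟫ :=
      Finset.sum_nonneg fun i _ => (hP i).2 (y i)
    have e2 : (0:ℝ) ≤ σ⁻¹ * (⟪u, Sf u⟫ + ∑ i, ⟪y i, (P i) (y i)⟫) := by positivity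
    have e3 : (0:ℝ) ≤ ⟪u, Tf u⟫ := hTf.2 u
    have e4 : (0:ℝ) ≤ ∑ i, ⟪y i, (T i) (y i)⟫ :=
      Finset.sum_nonneg fun i _ => hTpsd i (y i)
    have e5nn : ∀ i : Fin p, (0:ℝ) ≤ ⟪(A i) (s u y i), (Einv i) ((A i) (s u y i))⟫ := by
      intro i
      rcases eq_or_ne ((A i) (s u y i)) 0 with h | h
      · simp [h]
      · exact le_of_lt ((hEinv i).2 _ h)
    have e5 : (0:ℝ) ≤ ∑ i, ⟪(A i) (s u y i), (Einv i) ((A i) (s u y i))⟫ :=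
      Finset.sum_nonneg fun i _ => e5nn i
    -- each term is zero
    have z1 : ‖(adjoint F) u + ∑ i, (adjoint (A i)) (y i)‖ ^ 2 = 0 := by linarith
    have z2 : σ⁻¹ * (⟪u, Sf u⟫ + ∑ i, ⟪y i, (P i) (y i)⟫) = 0 := by linarith
    have z3 : ⟪u, Tf u⟫ = 0 := by linarith
    have z4 : ∑ i, ⟪y i, (T i) (y i)⟫ = 0 := by linarith
    have z5 : ∑ i, ⟪(A i) (s u y i), (Einv i) ((A i) (s u y i))⟫ = 0 := by linarith
    have hfull : (adjoint F) u + ∑ i, (adjoint (A i)) (y i) = 0 := by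
      rw [pow_eq_zero_iff (two_ne_zero), norm_eq_zero] at z1
      exact z1
    have z2' : ⟪u, Sf u⟫ + ∑ i, ⟪y i, (P i) (y i)⟫ = 0 := by
      rcases mul_eq_zero.mp z2 with h | h
      · exact absurd h (ne_of_gt hσ')
      · exact h
    have hSf0 : ⟪u, Sf u⟫ = 0 := by linarith
    have hPsum : ∑ i, ⟪y i, (P i) (y i)⟫ = 0 := by linarith
    have hP0 : ∀ i : Fin p, ⟪y i, (P i) (y i)⟫ = 0 := by
      intro i
      have := (Finset.sum_eq_zero_iff_of_nonneg
        (fun i _ => (hP i).2 (y i))).mp hPsum i (Finset.mem_univ i)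
      exact this
    have hT0 : ∀ i : Fin p, ⟪y i, (T i) (y i)⟫ = 0 := by
      intro i
      exact (Finset.sum_eq_zero_iff_of_nonneg
        (fun i _ => hTpsd i (y i))).mp z4 i (Finset.mem_univ i)
    have hAs0 : ∀ i : Fin p, (A i) (s u y i) = 0 := by
      intro i
      have hz := (Finset.sum_eq_zero_iff_of_nonneg
        (fun i _ => e5nn i)).mp z5 i (Finset.mem_univ i)
      by_contra h
      exact absurd hz (ne_of_gt ((hEinv i).2 _ h))
    -- downward induction
    have key : ∀ m : ℕ, m ≤ p →
        ((adjoint F) u + ∑ j ∈ Finset.univ.filter (fun j : Fin p => (j : ℕ) < p - m),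
          (adjoint (A j)) (y j) = 0)
        ∧ ∀ j : Fin p, p - m ≤ (j : ℕ) → y j = 0 := by
      intro m
      induction m with
      | zero =>
        intro _
        constructor
        · have : Finset.univ.filter (fun j : Fin p => (j : ℕ) < p - 0) = Finset.univ := by
            apply Finset.filter_true_of_mem
            intro j _
            simpa using j.isLt
          rw [this]
          exact hfull
        · intro j hj
          exact absurd j.isLt (by omega)
      | succ m ih =>
        intro hm1
        have hm : m ≤ p := by omega
        obtain ⟨hS, hy⟩ := ih hm
        set k : Fin p := ⟨p - (m + 1), by omega⟩ with hk
        have hkv : (k : ℕ) = p - (m + 1) := rfl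
        have hpm : p - m = (k : ℕ) + 1 := by omega
        -- the sum up to k as filter decomposition
        have hfilt : Finset.univ.filter (fun j : Fin p => (j : ℕ) < (k : ℕ) + 1)
            = insert k (Finset.univ.filter (fun j : Fin p => (j : ℕ) < (k : ℕ))) := by
          ext j
          simp only [Finset.mem_filter, Finset.mem_univ, true_and, Finset.mem_insert]
          constructor
          · intro h
            rcases Nat.lt_succ_iff_lt_or_eq.mp h with h | h
            · exact Or.inr h
            · exact Or.inl (Fin.ext h)
          · rintro (h | h)
            · rw [h]; omega
            · omega
        have hknotmem : k ∉ Finset.univ.filter (fun j : Fin p => (j : ℕ) < (k : ℕ)) := by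
          simp
        have hsum_split : ∑ j ∈ Finset.univ.filter (fun j : Fin p => (j : ℕ) < (k : ℕ) + 1),
            (adjoint (A j)) (y j)
            = (adjoint (A k)) (y k) +
              ∑ j ∈ Finset.univ.filter (fun j : Fin p => (j : ℕ) < (k : ℕ)),
                (adjoint (A j)) (y j) := by
          rw [hfilt, Finset.sum_insert hknotmem]
        -- s u y k equals the nat-filter partial sum
        have hsk : s u y k = (adjoint F) u +
            ∑ j ∈ Finset.univ.filter (fun j : Fin p => (j : ℕ) < (k : ℕ)),
              (adjoint (A j)) (y j) := by
          show (adjoint F) u + ∑ j ∈ Finset.univ.filter (fun j => j < k),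
            (adjoint (A j)) (y j) = _
          congr 1
        have hSk1 : (adjoint F) u +
            ∑ j ∈ Finset.univ.filter (fun j : Fin p => (j : ℕ) < (k : ℕ) + 1),
              (adjoint (A j)) (y j) = 0 := by
          rw [← hpm]
          exact hS
        have hAy : (adjoint (A k)) (y k) = -(s u y k) := by
          rw [hsum_split] at hSk1
          rw [hsk]
          linear_combination (norm := abel) hSk1
        have hAk0 : (A k) (s u y k) = 0 := hAs0 k
        have hnorm0 : ‖(adjoint (A k)) (y k)‖ ^ 2 = 0 := by
          rw [← real_inner_self_eq_norm_sq]
          nth_rewrite 2 [hAy]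
          rw [inner_neg_right, ContinuousLinearMap.adjoint_inner_left, hAk0,
            inner_zero_right, neg_zero]
        have hEk0 : ⟪y k, (E k) (y k)⟫ = 0 := by
          have hTk : (T k) (y k) = (E k) (y k) - σ⁻¹ • (P k) (y k)
              - (A k) ((adjoint (A k)) (y k)) := rfl
          have h1 := hT0 k
          rw [hTk, inner_sub_right, inner_sub_right, real_inner_smul_right] at h1
          have h2 : ⟪y k, (A k) ((adjoint (A k)) (y k))⟫
              = ‖(adjoint (A k)) (y k)‖ ^ 2 := by
            rw [← ContinuousLinearMap.adjoint_inner_left (A k),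
              real_inner_self_eq_norm_sq]
          rw [h2, hnorm0] at h1
          have h3 := hP0 k
          rw [h3, mul_zero] at h1
          linarith
        have hyk : y k = 0 := by
          by_contra h
          exact absurd hEk0 (ne_of_gt ((hE k).2 _ h))
        constructor
        · have : (p : ℕ) - (m + 1) = (k : ℕ) := rfl
          rw [this]
          rw [hsum_split, hyk, map_zero, zero_add] at hSk1
          exact hSk1
        · intro j hj
          rcases eq_or_ne j k with h | h
          · rw [h]; exact hyk
          · apply hy
            have : (j : ℕ) ≠ (k : ℕ) := fun hc => h (Fin.ext hc)
            omega
    obtain ⟨hS0, hy0⟩ := key p le_rfl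
    have hfilt0 : Finset.univ.filter (fun j : Fin p => (j : ℕ) < p - p) = ∅ := by
      apply Finset.filter_false_of_mem
      intro j _
      omega
    rw [hfilt0, Finset.sum_empty, add_zero] at hS0
    have hyall : y = 0 := by
      funext j
      exact hy0 j (by omega)
    have hu : u = 0 := by
      by_contra h
      have := hM.2 u h
      rw [hMquad u, hS0] at this
      simp only [norm_zero] at this
      rw [hSf0, z3] at this
      norm_num at this
    exact hne ⟨hu, hyall⟩

end
end

section
/- Consider min { f(u) + g(v) : F* u + G* v = c } with g(v) = (1/2)⟨v, Σ_g v⟩ − ⟨b, v⟩ quadratic. With E_g ⪰ σ⁻¹Σ_g + G G* positive definite, T_g := E_g − σ⁻¹Σ_g − G G*, ᾱ := σ⁻¹ b + T_g v̄ + G(c − σ⁻¹ x̄), and v′ := E_g⁻¹(ᾱ − G F* ū), the following two updates produce the same point u⁺: (a) u⁺ = argmin_u { L_σ(u, v̄; x̄) + ⟨δ̄, u⟩ + (σ/2)‖u − ū‖²_{T_f} } where δ̄ = F G* E_g⁻¹ (b − G x̄ − Σ_g v̄ + σ G(c − F* ū − G* v̄)); (b) u⁺ = argmin_u { L_σ(u,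 v′; x̄) + (σ/2)‖u − ū‖²_{T_f} }. That is, the optimality conditions 0 ∈ ∂f(u⁺) + F x̄ + σ F(F* u⁺ + G* v̄ − c) + δ̄ + σ T_f(u⁺ − ū) and 0 ∈ ∂f(u⁺) + F x̄ + σ F(F* u⁺ + G* v′ − c) + σ T_f(u⁺ − ū) are equivalent. -/
open ContinuousLinearMap RealInnerProductSpace

noncomputable section

/-- The convex subdifferential of an extended-real-valued function. -/
def SubDiff {U : Type*} [NormedAddCommGroup U] [InnerProductSpace ℝ U]
    (f : U → EReal) (u : U) : Set U :=
  {ξ | ∀ v : U, f u + ((⟪ξ, v - u⟫ : ℝ) : EReal) ≤ f v}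

/-- Equivalence of the two `u`-updates in the SCB scheme: the optimality
condition with the auxiliary linear term `δ̄` and `v̄` is equivalent to the
optimality condition with `v′ = E_g⁻¹(ᾱ − G F* ū)` and no linear term. -/
theorem scb_u_update_equivalence
    {X U V : Type*}
    [NormedAddCommGroup X] [InnerProductSpace ℝ X] [FiniteDimensional ℝ X]
    [NormedAddCommGroup U] [InnerProductSpace ℝ U] [FiniteDimensional ℝ U]
    [NormedAddCommGroup V] [InnerProductSpace ℝ V] [FiniteDimensional ℝ V]
    (f : U → EReal)
    (hproper : (∃ u, f u ≠ ⊤) ∧ ∀ u, f u ≠ ⊥)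
    (hclosed : LowerSemicontinuous f)
    (hconvex : ∀ (x y : U) (t : ℝ), 0 ≤ t → t ≤ 1 →
      f (t • x + (1 - t) • y) ≤ ((t : ℝ) : EReal) * f x + (((1 - t : ℝ)) : EReal) * f y)
    (F : X →L[ℝ] U) (G : X →L[ℝ] V)
    (Sg : V →L[ℝ] V) (hSg : IsPSD Sg)
    (b : V) (σ : ℝ) (hσ : 0 < σ) (c xbar : X) (ubar : U) (vbar : V)
    (Eg Eginv : V →L[ℝ] V) (hEg : IsPD Eg)
    (hmaj : IsPSD (Eg - (σ⁻¹ • Sg + G.comp (adjoint G))))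
    (hinv1 : Eg.comp Eginv = 1) (hinv2 : Eginv.comp Eg = 1)
    (Tf : U →L[ℝ] U) (hTf : IsPSD Tf) :
    let Tg : V →L[ℝ] V := Eg - σ⁻¹ • Sg - G.comp (adjoint G)
    let α : V := σ⁻¹ • b + Tg vbar + G (c - σ⁻¹ • xbar)
    let vprime : V := Eginv (α - G ((adjoint F) ubar))
    let δ : U := F ((adjoint G) (Eginv
      (b - G xbar - Sg vbar + σ • (G (c - (adjoint F) ubar - (adjoint G) vbar)))))
    ∀ up : U,
      (-(F xbar + σ • (F ((adjoint F) up + (adjoint G) vbar - c)) + δ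
          + σ • (Tf (up - ubar))) ∈ SubDiff f up)
        ↔ (-(F xbar + σ • (F ((adjoint F) up + (adjoint G) vprime - c))
          + σ • (Tf (up - ubar))) ∈ SubDiff f up) := by
  intro Tg α vprime δ up
  have hσ' : σ ≠ 0 := ne_of_gt hσ
  set w := b - G xbar - Sg vbar + σ • (G (c - (adjoint F) ubar - (adjoint G) vbar)) with hw
  have hvb : Eginv (Eg vbar) = vbar := by
    have := congrArg (fun T : V →L[ℝ] V => T vbar) hinv2
    simpa using this
  have harg : α - G ((adjoint F) ubar) - Eg vbar = σ⁻¹ • w := by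
    simp only [α, Tg, hw, ContinuousLinearMap.sub_apply, ContinuousLinearMap.smul_apply,
      ContinuousLinearMap.comp_apply, map_sub, map_smul, smul_add, smul_sub, smul_smul,
      inv_mul_cancel₀ hσ', one_smul]
    abel
  have h1 : vprime - vbar = Eginv (σ⁻¹ • w) := by
    calc vprime - vbar = Eginv (α - G ((adjoint F) ubar)) - Eginv (Eg vbar) := by rw [hvb]
      _ = Eginv (α - G ((adjoint F) ubar) - Eg vbar) := (map_sub _ _ _).symm
      _ = Eginv (σ⁻¹ • w) := by rw [harg]
  have hδ : δ = σ • F ((adjoint G) (vprime - vbar)) := by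
    rw [h1, map_smul, map_smul, map_smul, smul_smul, mul_inv_cancel₀ hσ', one_smul]
  have key : F xbar + σ • (F ((adjoint F) up + (adjoint G) vbar - c)) + δ
      + σ • (Tf (up - ubar))
      = F xbar + σ • (F ((adjoint F) up + (adjoint G) vprime - c)) + σ • (Tf (up - ubar)) := by
    rw [hδ]
    simp only [map_sub, map_add]
    module
  rw [key]

end
end
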